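/- arXiv:1504.03065 — 4 statements merged into one kernel-verified Lean document; each statement's English description precedes it below -/
import Mathlib

section
/- Let k ≥ 3 be an integer. Suppose (i) for all n with 1 ≤ n ≤ 2^{k+1}, λ_n ≤ log₂ n with equality if and only if n is a power of 2; (ii) λ_n < log₂(n−1) for all n with 2^k + 2 ≤ n ≤ 2^{k+1} − 1; (iii) λ_{2^d−1} < log₂(2^d − 2) for all integers d ≥ 5; and (iv) λ_{2^d+1} < log₂(2^d + 1/2) for all integers d ≥ 3. Then for every integer n ≥ 1, λ_n ≤ log₂ n with equality if and only if n is a power of 2. -/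
/-!
Two spectral facts about `G_n` drive the argument. First, `G_n` is an induced subgraph of `G_m`
for `n ≤ m`, so `λ_n ≤ λ_m` (extending vectors by zero preserves Rayleigh quotients).
Second, splitting `{0, …, 2n-1}` into even and odd vertices exhibits `G_{2n}` as `G_n □ K_2`,
whose adjacency matrix is the block matrix `[[A, 1], [1, A]]`; hence `λ_{2n} = λ_n + 1`, and in
particular `λ_{2^d} = d`.

Beyond `2^{k+1}` the strict bound `λ_n < log₂(n-1)` (for `n` neither `2^d` nor `2^d+1`) climbs
from one dyadic block to the next: for `n = 2j` it follows from the bound at `j` (or from (iv)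
when `j = 2^d+1`), and for `n = 2j-1` from `λ_{2j-1} ≤ λ_{2j}` and the bound at `j` (or from
(iii) when `j = 2^d`). The exceptional `n = 2^d+1` are covered directly by (iv).
-/

/-- The bricklayer's graph `G_n`: vertices `0, …, n-1`, adjacent iff their binary
expansions differ in exactly one bit (i.e. their XOR is a power of two). -/
def bricklayerGraph (n : ℕ) : SimpleGraph (Fin n) where
  Adj u v := ∃ k : ℕ, (u.val ^^^ v.val) = 2 ^ k
  symm := by
    refine ⟨?_⟩
    rintro u v ⟨k, h⟩
    exact ⟨k, by rwa [Nat.xor_comm]⟩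
  loopless := by
    refine ⟨?_⟩
    rintro u ⟨k, h⟩
    rw [Nat.xor_self] at h
    exact (pow_ne_zero k (two_ne_zero)) h.symm

noncomputable instance (n : ℕ) : DecidableRel (bricklayerGraph n).Adj :=
  Classical.decRel _

/-- `λ_n`: the principal (largest) eigenvalue of the adjacency matrix of `G_n` over ℝ. -/
noncomputable def bricklayerLambda (n : ℕ) : ℝ :=
  sSup (spectrum ℝ ((bricklayerGraph n).adjMatrix ℝ))

namespace Matrix

lemma spectrum_submatrix_equiv {R ι κ : Type*} [CommRing R] [Fintype ι] [DecidableEq ι]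
    [Fintype κ] [DecidableEq κ] (A : Matrix κ κ R) (e : ι ≃ κ) :
    spectrum R (A.submatrix e e) = spectrum R A := by
  simpa using AlgEquiv.spectrum_eq (reindexAlgEquiv R R e.symm) A

variable {ι : Type*} [Fintype ι] [DecidableEq ι] {A : Matrix ι ι ℝ}

lemma le_sSup_spectrum_of_mulVec_eq_smul {μ : ℝ} {v : ι → ℝ} (hv : v ≠ 0)
    (h : A *ᵥ v = μ • v) : μ ≤ sSup (spectrum ℝ A) := by
  refine le_csSup A.finite_real_spectrum.bddAbove ?_
  rw [← spectrum_toLin', ← Module.End.hasEigenvalue_iff_mem_spectrum]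
  exact Module.End.hasEigenvalue_of_hasEigenvector
    ⟨Module.End.mem_eigenspace_iff.mpr (by rwa [toLin'_apply]), hv⟩

namespace IsHermitian

lemma exists_mulVec_eq_sSup_spectrum_smul [Nonempty ι] (hA : A.IsHermitian) :
    ∃ v ≠ 0, A *ᵥ v = sSup (spectrum ℝ A) • v := by
  have hne : (spectrum ℝ A).Nonempty := by
    rw [hA.spectrum_real_eq_range_eigenvalues]; exact Set.range_nonempty _
  have hmem : sSup (spectrum ℝ A) ∈ spectrum ℝ (toLin' A) := by
    rw [spectrum_toLin']; exact hne.csSup_mem A.finite_real_spectrum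
  obtain ⟨v, hv⟩ := (Module.End.hasEigenvalue_iff_mem_spectrum.mpr hmem).exists_hasEigenvector
  exact ⟨v, hv.2, by rw [← toLin'_apply]; exact hv.apply_eq_smul⟩

lemma dotProduct_mulVec_le_sSup_spectrum_mul (hA : A.IsHermitian) (x : ι → ℝ) :
    x ⬝ᵥ A *ᵥ x ≤ sSup (spectrum ℝ A) * (x ⬝ᵥ x) := by
  set c := sSup (spectrum ℝ A)
  have hPSD : (algebraMap ℝ (Matrix ι ι ℝ) c - A).PosSemidef := by
    refine posSemidef_iff_isHermitian_and_spectrum_nonneg.mpr ⟨?_, ?_⟩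
    · exact (isHermitian_diagonal _).sub hA
    · rw [← spectrum.singleton_sub_eq]
      rintro _ ⟨_, rfl, μ, hμ, rfl⟩
      exact sub_nonneg.mpr (le_csSup A.finite_real_spectrum.bddAbove hμ)
  have := hPSD.dotProduct_mulVec_nonneg x
  rw [Algebra.algebraMap_eq_smul_one, sub_mulVec, smul_mulVec, one_mulVec, star_trivial,
    dotProduct_sub, dotProduct_smul, smul_eq_mul] at this
  linarith

lemma sSup_spectrum_le_of_forall_dotProduct_mulVec_le [Nonempty ι] (hA : A.IsHermitian)
    {c : ℝ} (h : ∀ x, x ⬝ᵥ A *ᵥ x ≤ c * (x ⬝ᵥ x)) : sSup (spectrum ℝ A) ≤ c := by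
  obtain ⟨v, hv0, hv⟩ := hA.exists_mulVec_eq_sSup_spectrum_smul
  have hpos : 0 < v ⬝ᵥ v := by simpa using dotProduct_star_self_pos_iff.mpr hv0
  have := h v
  rw [hv, dotProduct_smul, smul_eq_mul] at this
  exact le_of_mul_le_mul_right this hpos

lemma sSup_spectrum_submatrix_le {κ : Type*} [Fintype κ] [DecidableEq κ] [Nonempty ι]
    {B : Matrix κ κ ℝ} (hB : B.IsHermitian) {f : ι → κ} (hf : Function.Injective f) :
    sSup (spectrum ℝ (B.submatrix f f)) ≤ sSup (spectrum ℝ B) := by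
  refine (hB.submatrix f).sSup_spectrum_le_of_forall_dotProduct_mulVec_le fun x => ?_
  set w := Function.extend f x 0
  have hw : w ∘ f = x := funext fun i => hf.extend_apply x 0 i
  have hdot (g : κ → ℝ) : w ⬝ᵥ g = x ⬝ᵥ (g ∘ f) := by
    refine (Fintype.sum_of_injective f hf _ _ (fun k hk => ?_) fun i => ?_).symm
    · simp [w, Function.extend_apply' _ _ _ fun ⟨i, hi⟩ => hk ⟨i, hi⟩]
    · simp [w, hf.extend_apply]
  have hBw : (B *ᵥ w) ∘ f = B.submatrix f f *ᵥ x := by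
    ext i
    simp only [Function.comp_apply, mulVec, dotProduct_comm _ w, hdot, dotProduct_comm x]
    rfl
  have := hB.dotProduct_mulVec_le_sSup_spectrum_mul w
  rwa [hdot, hdot, hw, hBw] at this

lemma sSup_spectrum_fromBlocks_one_one [Nonempty ι] (hA : A.IsHermitian) :
    sSup (spectrum ℝ (Matrix.fromBlocks A 1 1 A)) = sSup (spectrum ℝ A) + 1 := by
  have hM : (Matrix.fromBlocks A 1 1 A).IsHermitian := hA.fromBlocks (by simp) hA
  refine le_antisymm (hM.sSup_spectrum_le_of_forall_dotProduct_mulVec_le fun w => ?_) ?_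
  · rw [← Sum.elim_comp_inl_inr w]
    set x := w ∘ Sum.inl
    set y := w ∘ Sum.inr
    rw [fromBlocks_mulVec, Sum.elim_comp_inl, Sum.elim_comp_inr, one_mulVec, one_mulVec,
      sumElim_dotProduct_sumElim, sumElim_dotProduct_sumElim, dotProduct_add, dotProduct_add,
      dotProduct_comm y x]
    have hx := hA.dotProduct_mulVec_le_sSup_spectrum_mul x
    have hy := hA.dotProduct_mulVec_le_sSup_spectrum_mul y
    have hxy : 0 ≤ (x - y) ⬝ᵥ (x - y) := by simpa using dotProduct_star_self_nonneg (x - y)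
    simp only [sub_dotProduct, dotProduct_sub, dotProduct_comm y x] at hxy
    nlinarith
  · obtain ⟨v, hv0, hv⟩ := hA.exists_mulVec_eq_sSup_spectrum_smul
    refine le_sSup_spectrum_of_mulVec_eq_smul (v := Sum.elim v v) ?_ ?_
    · exact fun h => hv0 (funext fun i => congrFun h (Sum.inl i))
    · rw [fromBlocks_mulVec, Sum.elim_comp_inl, Sum.elim_comp_inr, one_mulVec, hv, add_comm v]
      ext (i | i) <;> simp [add_mul]

end IsHermitian

end Matrix

namespace Nat

lemma two_mul_add_xor_two_mul_add {i j : ℕ} (hi : i < 2) (hj : j < 2) (a b : ℕ) :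
    (2 * a + i) ^^^ (2 * b + j) = 2 * (a ^^^ b) + (i + j) % 2 := by
  have hdiv := Nat.xor_div_two (a := 2 * a + i) (b := 2 * b + j)
  have hmod := Nat.xor_mod_two_eq_one (a := 2 * a + i) (b := 2 * b + j)
  rw [show (2 * a + i) / 2 = a by omega, show (2 * b + j) / 2 = b by omega] at hdiv
  omega

lemma exists_two_mul_eq_two_pow_iff (x : ℕ) : (∃ k, 2 * x = 2 ^ k) ↔ ∃ k, x = 2 ^ k := by
  constructor
  · rintro ⟨_ | k, hk⟩
    · omega
    · exact ⟨k, by rw [pow_succ] at hk; omega⟩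
  · rintro ⟨k, rfl⟩
    exact ⟨k + 1, by ring⟩

lemma exists_two_mul_add_one_eq_two_pow_iff (x : ℕ) : (∃ k, 2 * x + 1 = 2 ^ k) ↔ x = 0 := by
  constructor
  · rintro ⟨_ | k, hk⟩
    · omega
    · rw [pow_succ] at hk; omega
  · rintro rfl
    exact ⟨0, rfl⟩

end Nat

def finSumFinEquivEvenOdd (n : ℕ) : Fin n ⊕ Fin n ≃ Fin (2 * n) where
  toFun := Sum.elim (fun a => ⟨2 * a, by omega⟩) (fun a => ⟨2 * a + 1, by omega⟩)
  invFun u := if u.val % 2 = 0 then .inl ⟨u / 2, by omega⟩ else .inr ⟨u / 2, by omega⟩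
  left_inv := by rintro (a | a) <;> simp [Fin.ext_iff]; omega
  right_inv u := by by_cases h : u.val % 2 = 0 <;> simp [h, Fin.ext_iff] <;> omega

open Matrix in
lemma bricklayerGraph_two_mul_adjMatrix_submatrix (n : ℕ) :
    ((bricklayerGraph (2 * n)).adjMatrix ℝ).submatrix (finSumFinEquivEvenOdd n)
      (finSumFinEquivEvenOdd n) =
      fromBlocks ((bricklayerGraph n).adjMatrix ℝ) 1 1 ((bricklayerGraph n).adjMatrix ℝ) := by
  ext (a | a) (b | b) <;>
    simp only [submatrix_apply, finSumFinEquivEvenOdd, Equiv.coe_fn_mk, Sum.elim_inl,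
      Sum.elim_inr, fromBlocks_apply₁₁, fromBlocks_apply₁₂, fromBlocks_apply₂₁,
      fromBlocks_apply₂₂, SimpleGraph.adjMatrix_apply, one_apply] <;>
    refine if_congr ?_ rfl rfl <;>
    simp only [bricklayerGraph]
  · have h := Nat.two_mul_add_xor_two_mul_add (i := 0) (j := 0) (by omega) (by omega) a b
    norm_num at h
    rw [h, Nat.exists_two_mul_eq_two_pow_iff]
  · have h := Nat.two_mul_add_xor_two_mul_add (i := 0) (j := 1) (by omega) (by omega) a b
    norm_num at h
    rw [h, Nat.exists_two_mul_add_one_eq_two_pow_iff, xor_eq_zero_iff, Fin.val_inj]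
  · have h := Nat.two_mul_add_xor_two_mul_add (i := 1) (j := 0) (by omega) (by omega) a b
    norm_num at h
    rw [h, Nat.exists_two_mul_add_one_eq_two_pow_iff, xor_eq_zero_iff, Fin.val_inj]
  · have h := Nat.two_mul_add_xor_two_mul_add (i := 1) (j := 1) (by omega) (by omega) a b
    norm_num at h
    rw [h, Nat.exists_two_mul_eq_two_pow_iff]

lemma bricklayerGraph_isHermitian_adjMatrix (n : ℕ) :
    ((bricklayerGraph n).adjMatrix ℝ).IsHermitian :=
  SimpleGraph.isHermitian_adjMatrix ℝ _

def bricklayerGraphCastLE {n m : ℕ} (h : n ≤ m) : bricklayerGraph n ↪g bricklayerGraph m :=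
  ⟨Fin.castLEEmb h, Iff.rfl⟩

lemma bricklayerLambda_mono {n m : ℕ} (hn : 0 < n) (h : n ≤ m) :
    bricklayerLambda n ≤ bricklayerLambda m := by
  have : NeZero n := ⟨hn.ne'⟩
  unfold bricklayerLambda
  rw [← (bricklayerGraphCastLE h).submatrix_adjMatrix ℝ]
  exact (bricklayerGraph_isHermitian_adjMatrix m).sSup_spectrum_submatrix_le
    (Fin.castLE_injective h)

lemma bricklayerLambda_two_mul {n : ℕ} (hn : 0 < n) :
    bricklayerLambda (2 * n) = bricklayerLambda n + 1 := by
  have : NeZero n := ⟨hn.ne'⟩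
  unfold bricklayerLambda
  rw [← Matrix.spectrum_submatrix_equiv _ (finSumFinEquivEvenOdd n),
    bricklayerGraph_two_mul_adjMatrix_submatrix]
  exact (bricklayerGraph_isHermitian_adjMatrix n).sSup_spectrum_fromBlocks_one_one

lemma bricklayerLambda_one : bricklayerLambda 1 = 0 := by
  have : (bricklayerGraph 1).adjMatrix ℝ = 0 := by
    ext u v
    simp [Subsingleton.elim u v]
  rw [bricklayerLambda, this, spectrum.zero_eq, csSup_singleton]

lemma bricklayerLambda_two_pow (d : ℕ) : bricklayerLambda (2 ^ d) = d := by
  induction d with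
  | zero => simpa using bricklayerLambda_one
  | succ d ih =>
    rw [pow_succ', bricklayerLambda_two_mul (by positivity), ih]
    push_cast
    ring

lemma bricklayerLambda_two_pow_eq_logb (d : ℕ) :
    bricklayerLambda (2 ^ d) = Real.logb 2 ((2 ^ d : ℕ) : ℝ) := by
  rw [bricklayerLambda_two_pow, Nat.cast_pow, Nat.cast_ofNat, Real.logb_pow,
    Real.logb_self_eq_one one_lt_two, mul_one]

lemma Real.logb_self_mul {b x : ℝ} (hb : 1 < b) (hx : x ≠ 0) :
    Real.logb b (b * x) = Real.logb b x + 1 := by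
  rw [Real.logb_mul (by positivity) hx, Real.logb_self_eq_one hb, add_comm]

lemma bricklayerLambda_two_mul_lt_logb {m : ℕ} (hm : 0 < m) {x : ℝ} (hx : 0 < x)
    (h : bricklayerLambda m < Real.logb 2 x) :
    bricklayerLambda (2 * m) < Real.logb 2 (2 * x) := by
  rw [bricklayerLambda_two_mul hm, Real.logb_self_mul one_lt_two hx.ne']
  linarith

lemma bricklayerLambda_two_mul_lt_logb_sub_one {j : ℕ} (hj : 2 ≤ j)
    (h : bricklayerLambda j < Real.logb 2 ((j : ℝ) - 1)) :
    bricklayerLambda (2 * j) < Real.logb 2 (((2 * j : ℕ) : ℝ) - 1) := by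
  have hj' : (2 : ℝ) ≤ j := by exact_mod_cast hj
  calc bricklayerLambda (2 * j) < Real.logb 2 (2 * ((j : ℝ) - 1)) :=
        bricklayerLambda_two_mul_lt_logb (by omega) (by linarith) h
    _ ≤ Real.logb 2 (((2 * j : ℕ) : ℝ) - 1) :=
        Real.logb_le_logb_of_le one_lt_two (by linarith) (by push_cast; linarith)

lemma bricklayerLambda_two_mul_sub_one_lt_logb_sub_one {j : ℕ} (hj : 2 ≤ j)
    (h : bricklayerLambda j < Real.logb 2 ((j : ℝ) - 1)) :
    bricklayerLambda (2 * j - 1) < Real.logb 2 (((2 * j - 1 : ℕ) : ℝ) - 1) := by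
  have hj' : (2 : ℝ) ≤ j := by exact_mod_cast hj
  calc bricklayerLambda (2 * j - 1) ≤ bricklayerLambda (2 * j) :=
        bricklayerLambda_mono (by omega) (by omega)
    _ < Real.logb 2 (2 * ((j : ℝ) - 1)) :=
        bricklayerLambda_two_mul_lt_logb (by omega) (by linarith) h
    _ = Real.logb 2 (((2 * j - 1 : ℕ) : ℝ) - 1) := by
        rw [Nat.cast_sub (by omega)]
        push_cast
        ring_nf

lemma bricklayerLambda_lt_logb_sub_one {k : ℕ} (hk : 3 ≤ k)
    (h2 : ∀ n : ℕ, 2 ^ k + 2 ≤ n → n ≤ 2 ^ (k + 1) - 1 →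
      bricklayerLambda n < Real.logb 2 ((n : ℝ) - 1))
    (h3 : ∀ d : ℕ, 5 ≤ d →
      bricklayerLambda (2 ^ d - 1) < Real.logb 2 ((2 : ℝ) ^ d - 2))
    (h4 : ∀ d : ℕ, 3 ≤ d →
      bricklayerLambda (2 ^ d + 1) < Real.logb 2 ((2 : ℝ) ^ d + 1 / 2))
    (n : ℕ) (hn : 2 ^ k + 2 ≤ n) (hpow : ∀ d, n ≠ 2 ^ d) (hpow1 : ∀ d, n ≠ 2 ^ d + 1) :
    bricklayerLambda n < Real.logb 2 ((n : ℝ) - 1) := by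
  induction n using Nat.strong_induction_on with | _ n ih =>
  have hk1 : 2 ^ (k + 1) = 2 * 2 ^ k := pow_succ' 2 k
  by_cases hsmall : n ≤ 2 ^ (k + 1) - 1
  · exact h2 n hn hsmall
  have hbig : 2 ^ (k + 1) + 2 ≤ n := by
    have := hpow (k + 1); have := hpow1 (k + 1); omega
  obtain ⟨j, rfl | rfl⟩ : ∃ j, n = 2 * j ∨ n = 2 * j - 1 := ⟨(n + 1) / 2, by omega⟩
  · by_cases hj : ∃ d, j = 2 ^ d + 1
    · obtain ⟨d, rfl⟩ := hj
      have hkd : k ≤ d := (Nat.pow_le_pow_iff_right one_lt_two).mp (by omega)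
      convert bricklayerLambda_two_mul_lt_logb (by omega) (by positivity) (h4 d (by omega))
        using 2
      push_cast
      ring
    · push Not at hj
      have hj' : ∀ d, j ≠ 2 ^ d := fun d hd => hpow (d + 1) (by rw [hd, pow_succ'])
      have hjk : 2 ^ k + 2 ≤ j := by have := hj k; omega
      exact bricklayerLambda_two_mul_lt_logb_sub_one (by omega) (ih j (by omega) hjk hj' hj)
  · by_cases hj : ∃ d, j = 2 ^ d
    · obtain ⟨d, rfl⟩ := hj
      have hkd : k < d := (Nat.pow_lt_pow_iff_right one_lt_two).mp (by omega)
      rw [← pow_succ']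
      convert h3 (d + 1) (by omega) using 2
      rw [Nat.cast_sub Nat.one_le_two_pow]
      push_cast
      ring
    · push Not at hj
      have hj1 : ∀ d, j ≠ 2 ^ d + 1 := fun d hd => hpow1 (d + 1) (by rw [hd, pow_succ']; omega)
      exact bricklayerLambda_two_mul_sub_one_lt_logb_sub_one (by omega)
        (ih j (by omega) (by omega) hj hj1)

lemma bricklayerLambda_lt_logb {k : ℕ} (hk : 3 ≤ k)
    (h2 : ∀ n : ℕ, 2 ^ k + 2 ≤ n → n ≤ 2 ^ (k + 1) - 1 →
      bricklayerLambda n < Real.logb 2 ((n : ℝ) - 1))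
    (h3 : ∀ d : ℕ, 5 ≤ d →
      bricklayerLambda (2 ^ d - 1) < Real.logb 2 ((2 : ℝ) ^ d - 2))
    (h4 : ∀ d : ℕ, 3 ≤ d →
      bricklayerLambda (2 ^ d + 1) < Real.logb 2 ((2 : ℝ) ^ d + 1 / 2))
    {n : ℕ} (hn : 2 ^ (k + 1) < n) (hpow : ∀ d, n ≠ 2 ^ d) :
    bricklayerLambda n < Real.logb 2 n := by
  have hn1 : (1 : ℝ) < n := by exact_mod_cast (Nat.one_le_two_pow.trans_lt hn)
  by_cases hpow1 : ∃ d, n = 2 ^ d + 1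
  · obtain ⟨d, rfl⟩ := hpow1
    have hkd : k + 1 ≤ d := (Nat.pow_le_pow_iff_right one_lt_two).mp (Nat.le_of_lt_succ hn)
    refine (h4 d (by omega)).trans (Real.logb_lt_logb one_lt_two (by positivity) ?_)
    push_cast
    linarith
  · push Not at hpow1
    have hk1 : 2 ^ (k + 1) = 2 * 2 ^ k := pow_succ' 2 k
    have := Nat.one_le_two_pow (n := k)
    exact (bricklayerLambda_lt_logb_sub_one hk h2 h3 h4 n (by omega) hpow hpow1).trans
      (Real.logb_lt_logb one_lt_two (by linarith) (by linarith))

/-- The staircase lemma: the four hypotheses for some `k ≥ 3` imply the main theorem. -/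
theorem bricklayer_staircase (k : ℕ) (hk : 3 ≤ k)
    (h1 : ∀ n : ℕ, 1 ≤ n → n ≤ 2 ^ (k + 1) →
      bricklayerLambda n ≤ Real.logb 2 n ∧
        (bricklayerLambda n = Real.logb 2 n ↔ ∃ d : ℕ, n = 2 ^ d))
    (h2 : ∀ n : ℕ, 2 ^ k + 2 ≤ n → n ≤ 2 ^ (k + 1) - 1 →
      bricklayerLambda n < Real.logb 2 ((n : ℝ) - 1))
    (h3 : ∀ d : ℕ, 5 ≤ d →
      bricklayerLambda (2 ^ d - 1) < Real.logb 2 ((2 : ℝ) ^ d - 2))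
    (h4 : ∀ d : ℕ, 3 ≤ d →
      bricklayerLambda (2 ^ d + 1) < Real.logb 2 ((2 : ℝ) ^ d + 1 / 2)) :
    ∀ n : ℕ, 1 ≤ n →
      bricklayerLambda n ≤ Real.logb 2 n ∧
        (bricklayerLambda n = Real.logb 2 n ↔ ∃ d : ℕ, n = 2 ^ d) := by
  intro n hn
  by_cases hsmall : n ≤ 2 ^ (k + 1)
  · exact h1 n hn hsmall
  by_cases hpow : ∃ d, n = 2 ^ d
  · obtain ⟨d, rfl⟩ := hpow
    have heq := bricklayerLambda_two_pow_eq_logb d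
    exact ⟨heq.le, iff_of_true heq ⟨d, rfl⟩⟩
  push Not at hpow
  have hlt := bricklayerLambda_lt_logb hk h2 h3 h4 (not_le.mp hsmall) hpow
  exact ⟨hlt.le, iff_of_false hlt.ne fun ⟨d, hd⟩ => hpow d hd⟩
end

section
/- Let d ≥ 1 and 0 ≤ r ≤ d be integers, and define polynomials p_0(λ) = λ, p_1(λ) = λ² − d, and p_r(λ) = λ·p_{r−1}(λ) − r(d − r + 1)·p_{r−2}(λ) for r ≥ 2. Then the principal (largest) eigenvalue of the adjacency matrix of the Hamming ball B_{d,r} is a root of p_r. -/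
/-- The `d`-dimensional hypercube graph `Q_d` on vertex set `{0,1}^d`:
two vertices are adjacent iff they differ in exactly one coordinate. -/
def hypercubeGraph (d : ℕ) : SimpleGraph (Fin d → Fin 2) where
  Adj u v := hammingDist u v = 1
  symm := by
    constructor
    intro u v h
    rwa [hammingDist_comm]
  loopless := by
    constructor
    intro u h
    simp [hammingDist_self] at h

noncomputable instance (d : ℕ) : DecidableRel (hypercubeGraph d).Adj :=
  Classical.decRel _

/-- The Hamming ball `B_{d,r}`: the subgraph of `Q_d` induced by the vertices having
at most `r` coordinates equal to `1`. -/
def hammingBall (d r : ℕ) : SimpleGraph {v : Fin d → Fin 2 // hammingNorm v ≤ r} :=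
  SimpleGraph.induce {v : Fin d → Fin 2 | hammingNorm v ≤ r} (hypercubeGraph d)

noncomputable instance (d r : ℕ) : DecidableRel (hammingBall d r).Adj :=
  Classical.decRel _

/-- The polynomials `p_r`: `p_0 = λ`, `p_1 = λ² - d`, and
`p_r = λ·p_{r-1} - r(d - r + 1)·p_{r-2}` for `r ≥ 2`. -/
noncomputable def ballPoly (d : ℕ) : ℕ → Polynomial ℝ
  | 0 => Polynomial.X
  | 1 => Polynomial.X ^ 2 - Polynomial.C (d : ℝ)
  | (m + 2) =>
      Polynomial.X * ballPoly d (m + 1) -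
        Polynomial.C (((m : ℝ) + 2) * ((d : ℝ) - ((m : ℝ) + 2) + 1)) * ballPoly d m

/-!
Let `w` be an eigenvector of the adjacency matrix `A` of `B_{d,r}` for its largest eigenvalue `μ`.
As `μ • 1 - A` is positive semidefinite and `A` is entrywise nonnegative,
`0 ≤ ⟪|w|, (μ • 1 - A) |w|⟫ ≤ ⟪w, (μ • 1 - A) w⟫ = 0`, so `|w|` is again an eigenvector for `μ`
and we may take `w ≥ 0`. A vertex of weight `k` has `d - k` neighbours of weight `k + 1` and `k`
of weight `k - 1`, so the level sums `c k = ∑_{|v| = k} w v` satisfy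
`μ c k = (d - k + 1) c (k - 1) + (k + 1) c (k + 1)` for `k ≤ r`, where `c (r + 1) = 0`. This is the
recurrence of the `p_k` up to normalisation: `p_k(μ) c 0 = (k + 1)! c (k + 1)`. At `k = r` it gives
`p_r(μ) c 0 = 0`, and `c 0 ≠ 0`, for otherwise every level sum, hence `w ≥ 0` itself, would vanish.
-/

open Finset Matrix
open scoped Nat

theorem Matrix.dotProduct_mulVec_le_abs {n : Type*} [Fintype n] {A : Matrix n n ℝ}
    (hA : ∀ i j, 0 ≤ A i j) (v : n → ℝ) : v ⬝ᵥ A *ᵥ v ≤ |v| ⬝ᵥ A *ᵥ |v| := by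
  simp only [dotProduct, mulVec, mul_sum, Pi.abs_apply]
  refine sum_le_sum fun i _ ↦ sum_le_sum fun j _ ↦ ?_
  calc v i * (A i j * v j) = A i j * (v i * v j) := by ring
    _ ≤ A i j * |v i * v j| := mul_le_mul_of_nonneg_left (le_abs_self _) (hA i j)
    _ = |v i| * (A i j * |v j|) := by rw [abs_mul]; ring

open scoped MatrixOrder in
theorem Matrix.IsHermitian.exists_nonneg_mulVec_eq_sSup_spectrum_smul {n : Type*} [Fintype n]
    [DecidableEq n] [Nonempty n] {A : Matrix n n ℝ} (hA : A.IsHermitian) (hA₀ : ∀ i j, 0 ≤ A i j) :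
    ∃ w : n → ℝ, w ≠ 0 ∧ 0 ≤ w ∧ A *ᵥ w = sSup (spectrum ℝ A) • w := by
  set μ := sSup (spectrum ℝ A)
  have hspec := hA.spectrum_real_eq_range_eigenvalues
  obtain ⟨i, hi⟩ : μ ∈ Set.range hA.eigenvalues := by
    simpa only [μ, hspec] using (Set.range_nonempty hA.eigenvalues).csSup_mem (Set.finite_range _)
  have hB : (algebraMap ℝ _ μ - A).PosSemidef :=
    le_iff.mp <| le_algebraMap_of_spectrum_le fun x hx ↦
      le_csSup (hspec ▸ (Set.finite_range _).bddAbove) hx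
  have hBx (x : n → ℝ) : (algebraMap ℝ _ μ - A) *ᵥ x = μ • x - A *ᵥ x := by
    rw [sub_mulVec, Algebra.algebraMap_eq_smul_one, smul_mulVec, one_mulVec]
  set v := (hA.eigenvectorBasis i).ofLp
  have hv : A *ᵥ v = μ • v := hi ▸ hA.mulVec_eigenvectorBasis i
  have hv0 : v ≠ 0 := by
    simpa [v] using hA.eigenvectorBasis.orthonormal.ne_zero i
  have hquad : |v| ⬝ᵥ (algebraMap ℝ _ μ - A) *ᵥ |v| = 0 := by
    refine le_antisymm ?_ (by simpa using hB.dotProduct_mulVec_nonneg |v|)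
    have hvv : |v| ⬝ᵥ |v| = v ⬝ᵥ v := by simp [dotProduct, abs_mul_abs_self]
    have := dotProduct_mulVec_le_abs hA₀ v
    rw [hBx, dotProduct_sub, dotProduct_smul, hvv]
    simpa [hv] using this
  refine ⟨|v|, by simpa using hv0, abs_nonneg v, ?_⟩
  have := (hB.dotProduct_mulVec_zero_iff |v|).mp (by simpa using hquad)
  rwa [hBx, sub_eq_zero, eq_comm] at this

theorem SimpleGraph.sum_adjMatrix_mulVec {V R : Type*} [Fintype V] [NonAssocSemiring R]
    (G : SimpleGraph V) [DecidableRel G.Adj] (s : Finset V) (w : V → R) :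
    ∑ v ∈ s, (G.adjMatrix R *ᵥ w) v = ∑ u, #{v ∈ s | G.Adj u v} * w u := by
  simp only [mulVec, dotProduct, SimpleGraph.adjMatrix_apply, ite_mul, one_mul, zero_mul]
  rw [sum_comm]
  simp [sum_ite, G.adj_comm]

theorem eval_ballPoly_mul_eq_factorial_mul (d : ℕ) {μ : ℝ} {c : ℕ → ℝ} {N : ℕ}
    (h₀ : μ * c 0 = c 1)
    (hsucc : ∀ m, m + 1 ≤ N → μ * c (m + 1) = (d - m) * c m + (m + 2) * c (m + 2)) :
    ∀ j ≤ N, (ballPoly d j).eval μ * c 0 = (j + 1)! * c (j + 1) := by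
  intro j
  induction j using Nat.twoStepInduction with
  | zero => intro _; simp [ballPoly, h₀]
  | one =>
    intro h1
    have h₁ := hsucc 0 h1
    simp only [ballPoly, Polynomial.eval_sub, Polynomial.eval_pow, Polynomial.eval_X,
      Polynomial.eval_C]
    norm_num at h₁ ⊢
    linear_combination μ * h₀ + h₁
  | more m ih₀ ih₁ =>
    intro hm
    have hm₀ := ih₀ (by omega)
    have hm₁ := ih₁ (by omega)
    have hm₂ := hsucc (m + 1) hm
    simp only [ballPoly, Polynomial.eval_sub, Polynomial.eval_mul, Polynomial.eval_X,
      Polynomial.eval_C]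
    simp only [Nat.factorial_succ (m + 2), Nat.factorial_succ (m + 1)] at hm₁ ⊢
    push_cast at hm₀ hm₁ hm₂ ⊢
    linear_combination μ * hm₁ - (m + 2) * (d - m - 1) * hm₀ + (m + 2) * (m + 1)! * hm₂

section HammingNorm

variable {ι : Type*} [Fintype ι]

theorem card_filter_eq_zero_eq_sub_hammingNorm (u : ι → Fin 2) :
    #{j | u j = 0} = Fintype.card ι - hammingNorm u := by
  have := card_filter_add_card_filter_not (s := univ) (p := fun j => u j = 0)
  rw [card_univ] at this
  simp only [hammingNorm, ne_eq]
  omega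

variable [DecidableEq ι] {u : ι → Fin 2} {j : ι}

theorem hammingNorm_add_single_of_eq_zero (h : u j = 0) :
    hammingNorm (u + Pi.single j 1) = hammingNorm u + 1 := by
  have : ({i | (u + Pi.single j 1 : ι → Fin 2) i ≠ 0} : Finset ι) =
      insert j ({i | u i ≠ 0} : Finset ι) := by
    ext i
    rcases eq_or_ne i j with rfl | hij <;> simp [*]
  rw [hammingNorm, this, card_insert_of_notMem (by simp [h]), hammingNorm]

theorem hammingNorm_add_single_add_one_of_ne_zero (h : u j ≠ 0) :
    hammingNorm (u + Pi.single j 1) + 1 = hammingNorm u := by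
  have : ({i | (u + Pi.single j 1 : ι → Fin 2) i ≠ 0} : Finset ι) =
      ({i | u i ≠ 0} : Finset ι).erase j := by
    ext i
    rcases eq_or_ne i j with rfl | hij
    · simp; omega
    · simp [*]
  rw [hammingNorm, this, card_erase_add_one (by simpa using h), hammingNorm]

theorem hammingNorm_eq_one_iff {x : ι → Fin 2} : hammingNorm x = 1 ↔ ∃ j, x = Pi.single j 1 := by
  constructor
  · intro hx
    obtain ⟨j, hj⟩ := card_eq_one.mp hx
    have hsupp (i : ι) : x i ≠ 0 ↔ i = j := by simpa using congr(i ∈ $hj)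
    refine ⟨j, funext fun i => ?_⟩
    rcases eq_or_ne i j with rfl | hij
    · have := (hsupp i).mpr rfl; simp; omega
    · simpa [hij] using (hsupp i).not.mpr hij
  · rintro ⟨j, rfl⟩
    rw [hammingNorm, card_eq_one]
    exact ⟨j, by ext i; by_cases i = j <;> simp [*]⟩

end HammingNorm

section HammingBall

variable {d : ℕ}

theorem hypercubeGraph_adj_iff {u v : Fin d → Fin 2} :
    (hypercubeGraph d).Adj u v ↔ ∃ j, v = u + Pi.single j 1 := by
  change hammingDist u v = 1 ↔ _
  simp only [hammingDist_eq_hammingNorm, hammingNorm_eq_one_iff, neg_add_eq_iff_eq_add]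

theorem card_hypercubeGraph_adj_hammingNorm_eq (u : Fin d → Fin 2) (i : ℕ) :
    #{v | (hypercubeGraph d).Adj u v ∧ hammingNorm v = i} =
      (if hammingNorm u + 1 = i then d - hammingNorm u else 0) +
        (if hammingNorm u = i + 1 then hammingNorm u else 0) := by
  have himage : ({v | (hypercubeGraph d).Adj u v ∧ hammingNorm v = i} : Finset _) =
      image (fun j => u + Pi.single j 1) {j | hammingNorm (u + Pi.single j 1) = i} := by
    ext v
    simp only [mem_filter, mem_univ, true_and, mem_image, hypercubeGraph_adj_iff]
    constructor
    · rintro ⟨⟨j, rfl⟩, hj⟩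
      exact ⟨j, hj, rfl⟩
    · rintro ⟨j, hj, rfl⟩
      exact ⟨⟨j, rfl⟩, hj⟩
  rw [himage, card_image_of_injective _ fun j j' h => by
      by_contra hne; simpa [Pi.single_apply, hne] using congr_fun h j,
    ← card_filter_add_card_filter_not (p := fun j => u j = 0), filter_filter, filter_filter]
  congr 1
  · rw [filter_congr fun j _ => and_congr_left fun (h : u j = 0) => by
      rw [hammingNorm_add_single_of_eq_zero h]]
    split_ifs with h
    · simpa [h] using card_filter_eq_zero_eq_sub_hammingNorm u
    · simp [h]
  · rw [filter_congr fun j _ => and_congr_left fun (h : u j ≠ 0) =>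
      show _ ↔ hammingNorm u = i + 1 by have := hammingNorm_add_single_add_one_of_ne_zero h; omega]
    split_ifs with h
    · simp only [h, true_and]; exact h
    · simp [h]

variable {r : ℕ}

theorem card_hammingBall_adj_hammingNorm_eq (u : {v : Fin d → Fin 2 // hammingNorm v ≤ r})
    {i : ℕ} (hi : i ≤ r) :
    #{v ∈ {v | hammingNorm v.1 = i} | (hammingBall d r).Adj u v} =
      #{v | (hypercubeGraph d).Adj u v ∧ hammingNorm v = i} := by
  refine card_bij (fun v _ => v.1) (fun v hv => ?_) (fun _ _ _ _ => Subtype.ext) fun x hx => ?_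
  · simp only [mem_filter, mem_univ, true_and] at hv ⊢
    exact ⟨hv.2, hv.1⟩
  · simp only [mem_filter, mem_univ, true_and] at hx
    exact ⟨⟨x, hx.2 ▸ hi⟩, by simpa [hammingBall] using hx.symm, rfl⟩

noncomputable def levelSum (w : {v : Fin d → Fin 2 // hammingNorm v ≤ r} → ℝ) (k : ℕ) : ℝ :=
  ∑ v with hammingNorm v.1 = k, w v

theorem levelSum_smul (c : ℝ) (w : {v : Fin d → Fin 2 // hammingNorm v ≤ r} → ℝ) (k : ℕ) :
    levelSum (c • w) k = c * levelSum w k := by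
  simp [levelSum, mul_sum]

theorem levelSum_adjMatrix_mulVec (w : {v : Fin d → Fin 2 // hammingNorm v ≤ r} → ℝ)
    {i : ℕ} (hi : i ≤ r) :
    levelSum ((hammingBall d r).adjMatrix ℝ *ᵥ w) i =
      (d - i + 1) * ∑ u with hammingNorm u.1 + 1 = i, w u + (i + 1) * levelSum w (i + 1) := by
  rw [levelSum, levelSum, SimpleGraph.sum_adjMatrix_mulVec, sum_filter, sum_filter, mul_sum,
    mul_sum, ← sum_add_distrib]
  refine sum_congr rfl fun u _ => ?_
  have hu : hammingNorm u.1 ≤ d := by simpa using hammingNorm_le_card_fintype (x := u.1)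
  rw [card_hammingBall_adj_hammingNorm_eq u hi, card_hypercubeGraph_adj_hammingNorm_eq]
  split_ifs with h₁ h₂ h₃
  · omega
  · rw [← h₁]; push_cast [Nat.cast_sub hu]; ring
  · rw [h₃]; push_cast; ring
  · simp

theorem levelSum_adjMatrix_mulVec_zero (w : {v : Fin d → Fin 2 // hammingNorm v ≤ r} → ℝ) :
    levelSum ((hammingBall d r).adjMatrix ℝ *ᵥ w) 0 = levelSum w 1 := by
  simp [levelSum_adjMatrix_mulVec w (Nat.zero_le r)]

theorem levelSum_adjMatrix_mulVec_succ (w : {v : Fin d → Fin 2 // hammingNorm v ≤ r} → ℝ)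
    {m : ℕ} (hm : m + 1 ≤ r) :
    levelSum ((hammingBall d r).adjMatrix ℝ *ᵥ w) (m + 1) =
      (d - m) * levelSum w m + (m + 2) * levelSum w (m + 2) := by
  rw [levelSum_adjMatrix_mulVec w hm]
  simp only [add_left_inj, levelSum]
  push_cast
  ring

theorem levelSum_eq_zero_of_lt (w : {v : Fin d → Fin 2 // hammingNorm v ≤ r} → ℝ) {k : ℕ}
    (hk : r < k) : levelSum w k = 0 :=
  sum_eq_zero fun v hv => absurd ((mem_filter.mp hv).2 ▸ v.2) (by omega)

theorem eq_zero_of_levelSum_eq_zero {w : {v : Fin d → Fin 2 // hammingNorm v ≤ r} → ℝ}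
    (hw : 0 ≤ w) (h : ∀ k, levelSum w k = 0) : w = 0 := by
  funext v
  exact (sum_eq_zero_iff_of_nonneg fun u _ => hw u).mp (h (hammingNorm v.1)) v (by simp)

end HammingBall

theorem hammingBall_principal_eigenvalue_isRoot_general (d r : ℕ) :
    (ballPoly d r).IsRoot (sSup (spectrum ℝ ((hammingBall d r).adjMatrix ℝ))) := by
  have : Nonempty {v : Fin d → Fin 2 // hammingNorm v ≤ r} := ⟨⟨0, by simp⟩⟩
  obtain ⟨w, hw₀, hw, hμ⟩ :=
    ((hammingBall d r).isHermitian_adjMatrix ℝ).exists_nonneg_mulVec_eq_sSup_spectrum_smul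
      fun u v => by rw [SimpleGraph.adjMatrix_apply]; split_ifs <;> norm_num
  have hrec := eval_ballPoly_mul_eq_factorial_mul d (c := levelSum w) (N := r)
    (by rw [← levelSum_smul, ← hμ, levelSum_adjMatrix_mulVec_zero])
    fun m hm => by rw [← levelSum_smul, ← hμ, levelSum_adjMatrix_mulVec_succ w hm]
  by_contra hroot
  rw [Polynomial.IsRoot.def] at hroot
  have hc₀ : levelSum w 0 = 0 := by
    simpa [levelSum_eq_zero_of_lt w r.lt_succ_self, hroot] using hrec r le_rfl
  refine hw₀ (eq_zero_of_levelSum_eq_zero hw fun k => ?_)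
  rcases k with _ | j
  · exact hc₀
  rcases le_or_gt j r with hj | hj
  · simpa [hc₀, Nat.factorial_ne_zero] using (hrec j hj).symm
  · exact levelSum_eq_zero_of_lt w (by omega)

/-- The principal eigenvalue of the Hamming ball `B_{d,r}` is a root of `p_r`. -/
theorem hammingBall_principal_eigenvalue_isRoot (d r : ℕ) (hd : 1 ≤ d) (hr : r ≤ d) :
    (ballPoly d r).IsRoot (sSup (spectrum ℝ ((hammingBall d r).adjMatrix ℝ))) :=
  hammingBall_principal_eigenvalue_isRoot_general d r
end

section
/- For all positive integers i and k, f_k(i, i) = i·(i−1)·(i−2)⋯(i−k+1), the falling factorial (i)_k. -/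
/-- The polynomials `f_k(d, λ)`: `f_1 = λ`, `f_2 = λ² - d`, and
`f_k = λ·f_{k-1} - (k-1)(d-k+2)·f_{k-2}` for `k ≥ 3`. -/
noncomputable def fPoly (d : ℝ) : ℕ → Polynomial ℝ
  | 0 => 1
  | 1 => Polynomial.X
  | 2 => Polynomial.X ^ 2 - Polynomial.C d
  | (m + 3) =>
      Polynomial.X * fPoly d (m + 2) -
        Polynomial.C ((((m : ℝ) + 3) - 1) * (d - ((m : ℝ) + 3) + 2)) * fPoly d (m + 1)

theorem fPoly_eval_self_aux (x : ℝ) :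
    ∀ k, (fPoly x k).eval x = ∏ j ∈ Finset.range k, (x - (j : ℝ))
  | 0 => by simp [fPoly]
  | 1 => by simp [fPoly]
  | 2 => by
      simp [fPoly, Finset.prod_range_succ]
      ring
  | (m + 3) => by
      have h1 := fPoly_eval_self_aux x (m + 1)
      have h2 := fPoly_eval_self_aux x (m + 2)
      have h3 : (∏ j ∈ Finset.range (m + 2), (x - (j : ℝ))) =
          (∏ j ∈ Finset.range (m + 1), (x - (j : ℝ))) * (x - ((m : ℝ) + 1)) := by
        rw [Finset.prod_range_succ]; norm_cast
      simp only [fPoly, Polynomial.eval_sub, Polynomial.eval_mul, Polynomial.eval_X,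
        Polynomial.eval_C, h1, h2]
      conv_rhs => rw [Finset.prod_range_succ, Finset.prod_range_succ]
      rw [h3]
      push_cast
      ring

/-- For positive integers `i` and `k`, `f_k(i, i)` equals the falling factorial
`(i)_k = i(i-1)(i-2)⋯(i-k+1)`. -/
theorem fPoly_eval_self (i k : ℕ) (hi : 1 ≤ i) (hk : 1 ≤ k) :
    (fPoly (i : ℝ) k).eval (i : ℝ) = ∏ j ∈ Finset.range k, ((i : ℝ) - j) := by
  exact fPoly_eval_self_aux (i : ℝ) k
end

section
/- For all integers k ≥ 1 and i ≥ 0, the derivative (with respect to λ) of the polynomial f_k(k+i, λ), evaluated at λ = k+i, equals k! · ∑_{j=0}^{k−1} binom(k−j+i−1, i) · 2^j / (j+1). -/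
/-!
Write `D_n = f_n'(d, d)`. Differentiating the defining recurrence and using
`f_n(d, d) = d(d-1)⋯(d-n+1)` gives a three-term recurrence for `D_n`, which collapses to the
first-order recurrence `D_{n+1} = (d - n) D_n + n! ∑_{m ≤ n} binom(d, m)`: this is the coefficient
form of `(1 + t) ∂ₜH = d H + (1 + t)^d / (1 - t)` for `H = ∂_λ ∑ f_n tⁿ / n!` at `λ = d`, the
generating function being `(1 + t)^((d+λ)/2) (1 - t)^((d-λ)/2)`. For `d = k + i` the claimed closed
form satisfies the first-order recurrence because of the identity
`∑_{m ≤ k} binom(k+1+i, m) = ∑_{j ≤ k} 2^j binom(k-j+i, i)`.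
-/

open Polynomial Finset
open scoped Nat

lemma fPoly_add_two (d : ℝ) (n : ℕ) :
    fPoly d (n + 2) = X * fPoly d (n + 1) - C ((n + 1) * (d - n)) * fPoly d n := by
  rcases n with _ | n
  · simp [fPoly, sq]
  · simp only [fPoly]
    congr 3
    push_cast
    ring

lemma fPoly_eval_self_s12 (d : ℝ) (n : ℕ) : (fPoly d n).eval d = (descPochhammer ℝ n).eval d := by
  induction n using Nat.twoStepInduction with
  | zero => simp [fPoly]
  | one => simp [fPoly, descPochhammer_one]
  | more n ih₀ ih₁ =>
    simp only [fPoly_add_two, eval_sub, eval_mul, eval_X, eval_C, ih₀, ih₁,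
      descPochhammer_succ_eval]
    push_cast
    ring

lemma derivative_fPoly_add_two_eval_self (d : ℝ) (n : ℕ) :
    (derivative (fPoly d (n + 2))).eval d =
      (descPochhammer ℝ (n + 1)).eval d + d * (derivative (fPoly d (n + 1))).eval d
        - (n + 1) * (d - n) * (derivative (fPoly d n)).eval d := by
  simp only [fPoly_add_two, derivative_sub, derivative_mul, derivative_X, derivative_C,
    eval_sub, eval_add, eval_mul, eval_one, eval_X, eval_C, eval_zero, fPoly_eval_self_s12]
  ring

/-- The defect between the two sides is multiplied by `n + 1` at each step and vanishes at
`n = 0`. -/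
lemma derivative_fPoly_succ_eval_self (d : ℝ) (n : ℕ) :
    (derivative (fPoly d (n + 1))).eval d =
      (d - n) * (derivative (fPoly d n)).eval d +
        n ! * ∑ m ∈ range (n + 1), (descPochhammer ℝ m).eval d / m ! := by
  induction n with
  | zero => simp [fPoly]
  | succ n ih =>
    have hsum : ((n + 1 : ℕ) ! : ℝ) * ∑ m ∈ range (n + 2), (descPochhammer ℝ m).eval d / m ! =
        (n + 1) * (n ! * ∑ m ∈ range (n + 1), (descPochhammer ℝ m).eval d / m !) +
          (descPochhammer ℝ (n + 1)).eval d := by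
      rw [sum_range_succ, Nat.factorial_succ]
      push_cast
      field_simp
    rw [derivative_fPoly_add_two_eval_self, hsum]
    push_cast
    linear_combination (n + 1 : ℝ) * ih

lemma sum_range_choose_eq_sum_pow_mul_choose (k i : ℕ) :
    ∑ m ∈ range (k + 1), (k + 1 + i).choose m =
      ∑ j ∈ range (k + 1), 2 ^ j * (k - j + i).choose i := by
  induction k with
  | zero => simp
  | succ k ih =>
    have hL : ∑ m ∈ range (k + 2), (k + 1 + i + 1).choose m =
        2 * ∑ m ∈ range (k + 1), (k + 1 + i).choose m + (k + 1 + i).choose i := by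
      rw [← Nat.choose_symm_add, sum_range_succ', Nat.choose_zero_right]
      simp only [Nat.choose_succ_succ', sum_add_distrib]
      rw [sum_range_succ' (fun m => (k + 1 + i).choose m), sum_range_succ _ k,
        Nat.choose_zero_right]
      ring
    have hR : ∑ j ∈ range (k + 2), 2 ^ j * (k + 1 - j + i).choose i =
        2 * ∑ j ∈ range (k + 1), 2 ^ j * (k - j + i).choose i + (k + 1 + i).choose i := by
      rw [sum_range_succ', mul_sum, pow_zero, one_mul, Nat.sub_zero]
      congr 1
      refine sum_congr rfl fun j _ => ?_
      rw [Nat.add_sub_add_right, pow_succ]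
      ring
    rw [show k + 1 + 1 + i = k + 1 + i + 1 by ring, hL, hR, ih]

noncomputable def derivClosedForm (k i : ℕ) : ℝ :=
  k ! * ∑ j ∈ range k, ((k - j + i - 1).choose i : ℝ) * 2 ^ j / (j + 1)

lemma derivClosedForm_succ (k i : ℕ) :
    derivClosedForm (k + 1) i =
      (i + 1) * derivClosedForm k (i + 1) +
        k ! * ∑ m ∈ range (k + 1), ((k + 1 + i).choose m : ℝ) := by
  have hpascal : ∀ r, ((r + i).choose (i + 1) : ℝ) * (i + 1) = (r + i).choose i * r := by
    intro r
    have h := Nat.choose_succ_right_eq (r + i) i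
    rw [Nat.add_sub_cancel] at h
    exact_mod_cast h
  have hextend : ∑ j ∈ range k, ((k - j + (i + 1) - 1).choose (i + 1) : ℝ) * 2 ^ j / (j + 1) =
      ∑ j ∈ range (k + 1), ((k - j + (i + 1) - 1).choose (i + 1) : ℝ) * 2 ^ j / (j + 1) := by
    rw [sum_range_succ, Nat.sub_self, Nat.choose_eq_zero_of_lt (by omega)]
    simp
  have hsum := congrArg (Nat.cast : ℕ → ℝ) (sum_range_choose_eq_sum_pow_mul_choose k i)
  push_cast at hsum
  rw [derivClosedForm, derivClosedForm, hextend, hsum, mul_sum, mul_sum, mul_sum, mul_sum,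
    ← sum_add_distrib]
  refine sum_congr rfl fun j hj => ?_
  obtain ⟨r, rfl⟩ : ∃ r, k = j + r := ⟨k - j, by grind⟩
  rw [show j + r + 1 - j + i - 1 = r + i by omega, show j + r - j + (i + 1) - 1 = r + i by omega,
    show j + r - j + i = r + i by omega, Nat.factorial_succ]
  push_cast
  field_simp
  linear_combination -hpascal r

lemma descPochhammer_eval_natCast_div_factorial (n m : ℕ) :
    (descPochhammer ℝ m).eval (n : ℝ) / m ! = n.choose m := by
  rw [descPochhammer_eval_eq_descFactorial, Nat.descFactorial_eq_factorial_mul_choose]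
  push_cast
  field_simp

theorem fPoly_derivative_eval_general (k i : ℕ) :
    (Polynomial.derivative (fPoly ((k : ℝ) + i) k)).eval ((k : ℝ) + i) =
      (k.factorial : ℝ) *
        ∑ j ∈ Finset.range k, ((k - j + i - 1).choose i : ℝ) * 2 ^ j / (j + 1) := by
  change _ = derivClosedForm k i
  induction k generalizing i with
  | zero => simp [fPoly, derivClosedForm]
  | succ k ih =>
    have hd : ((k + 1 : ℕ) : ℝ) + i = k + (i + 1 : ℕ) := by push_cast; ring
    have hforcing : ∀ m, (descPochhammer ℝ m).eval (((k + 1 : ℕ) : ℝ) + i) / m ! =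
        (k + 1 + i).choose m := fun m => by
      rw [← descPochhammer_eval_natCast_div_factorial]; push_cast; rfl
    rw [derivative_fPoly_succ_eval_self, derivClosedForm_succ,
      sum_congr rfl fun m _ => hforcing m, hd, ih]
    push_cast
    ring

/-- The derivative of `f_k(k+i, λ)` with respect to `λ`, evaluated at `λ = k + i`,
equals `k! · ∑_{j=0}^{k-1} C(k-j+i-1, i) · 2^j / (j+1)`. -/
theorem fPoly_derivative_eval (k i : ℕ) (hk : 1 ≤ k) :
    (Polynomial.derivative (fPoly ((k : ℝ) + i) k)).eval ((k : ℝ) + i) =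
      (k.factorial : ℝ) *
        ∑ j ∈ Finset.range k, ((k - j + i - 1).choose i : ℝ) * 2 ^ j / (j + 1) :=
  fPoly_derivative_eval_general k i
end
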